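/- arXiv:1403.3514 — 2 statements merged into one kernel-verified Lean document; each statement's English description precedes it below -/
import Mathlib

section
/- Define R_u = 1 + g T_u T_{u+1} where T_u = T [u]_x [u+3]_x/([u+1]_x [u+2]_x), T = (1+4x+x^2)/(1+x+x^2), g = x(1+x+x^2)/(1+4x+x^2)^2, and [u]_x = 1-x^u. Then R_u = ([2]_x)^2 [u+1]_x [u+3]_x / ([1]_x [3]_x ([u+2]_x)^2) as rational functions in x, for every natural number u. -/
noncomputable section

/-- The field of rational functions in one variable over ℚ. -/
abbrev K := RatFunc ℚ

/-- The formal variable x. -/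
def x : K := RatFunc.X

/-- [s]_x = 1 - x^s. -/
def br (s : ℕ) : K := 1 - x ^ s

/-- T = (1+4x+x²)/(1+x+x²). -/
def T : K := (1 + 4 * x + x ^ 2) / (1 + x + x ^ 2)

/-- g = x(1+x+x²)/(1+4x+x²)². -/
def g : K := x * (1 + x + x ^ 2) / (1 + 4 * x + x ^ 2) ^ 2

/-- T_s = T [s]_x [s+3]_x / ([s+1]_x [s+2]_x). -/
def Ts (s : ℕ) : K := T * br s * br (s + 3) / (br (s + 1) * br (s + 2))

/-- N_{s,t}. -/
def N (s t : ℕ) : K :=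
  br 3 * br (s + 2) * br (t + 2) * br (s + t + 3) /
    (br 2 * br (s + 3) * br (t + 3) * br (s + t + 2))

/-- X_{s,t}. -/
def Xc (s t : ℕ) : K :=
  br 3 * br (s + 1) * br (t + 1) * br (s + t + 3) /
    (br 1 * br (s + 3) * br (t + 3) * br (s + t + 1))

/-!
Since `g T² = x [1]/[3]`, the product `g T_u T_{u+1}` collapses to `x [1] [u] [u+4] / ([3] [u+2]²)`,
and after clearing denominators the claim becomes the three-term identity
`[1][3][u+2]² + x [1]² [u][u+4] = [2]² [u+1][u+3]`, a polynomial identity in `x` and `x^u`.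
All denominators are polynomials in `x` with constant term `1`, hence nonzero.
-/

open Polynomial

lemma algebraMap_ne_zero_of_eval_zero_ne_zero {p : ℚ[X]} (hp : p.eval 0 ≠ 0) :
    algebraMap ℚ[X] K p ≠ 0 :=
  RatFunc.algebraMap_ne_zero (by rintro rfl; exact hp (eval_zero))

lemma br_ne_zero {s : ℕ} (hs : s ≠ 0) : br s ≠ 0 := by
  have h : br s = algebraMap ℚ[X] K (1 - X ^ s) := by
    rw [map_sub, map_pow, map_one, RatFunc.algebraMap_X]; rfl
  exact h ▸ algebraMap_ne_zero_of_eval_zero_ne_zero (by simp [hs])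

lemma one_add_four_mul_x_add_x_sq_ne_zero : (1 + 4 * x + x ^ 2 : K) ≠ 0 := by
  have h : (1 + 4 * x + x ^ 2 : K) = algebraMap ℚ[X] K (1 + 4 * X + X ^ 2) := by
    rw [map_add, map_add, map_mul, map_pow, map_one, map_ofNat, RatFunc.algebraMap_X]; rfl
  exact h ▸ algebraMap_ne_zero_of_eval_zero_ne_zero (by simp)

lemma br_three_eq : br 3 = br 1 * (1 + x + x ^ 2) := by
  simp only [br]; ring

lemma one_add_x_add_x_sq_ne_zero : (1 + x + x ^ 2 : K) ≠ 0 :=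
  right_ne_zero_of_mul (br_three_eq ▸ br_ne_zero three_ne_zero)

lemma g_mul_T_sq : g * T ^ 2 = x * br 1 / br 3 := by
  have := one_add_x_add_x_sq_ne_zero
  have := br_ne_zero one_ne_zero
  have := one_add_four_mul_x_add_x_sq_ne_zero
  rw [br_three_eq, g, T]
  generalize 1 + 4 * x + x ^ 2 = t at *
  field_simp

lemma Ts_mul_Ts_succ (u : ℕ) :
    Ts u * Ts (u + 1) = T ^ 2 * br u * br (u + 4) / br (u + 2) ^ 2 := by
  have := br_ne_zero (u.succ_ne_zero)
  have := br_ne_zero (u + 2).succ_ne_zero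
  simp only [Ts]
  field_simp

lemma br_three_term (u : ℕ) :
    br 1 * br 3 * br (u + 2) ^ 2 + x * br 1 ^ 2 * br u * br (u + 4) =
      br 2 ^ 2 * br (u + 1) * br (u + 3) := by
  simp only [br, pow_add]; ring

theorem R_closed_form (u : ℕ) :
    1 + g * Ts u * Ts (u + 1) =
      (br 2) ^ 2 * br (u + 1) * br (u + 3) / (br 1 * br 3 * (br (u + 2)) ^ 2) := by
  have := br_ne_zero one_ne_zero
  have := br_ne_zero three_ne_zero
  have := br_ne_zero (u + 1).succ_ne_zero
  rw [mul_assoc, Ts_mul_Ts_succ, ← mul_div_assoc, ← mul_assoc, ← mul_assoc, g_mul_T_sq]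
  field_simp
  linear_combination br_three_term u
end
end

section
/- With [s]_x = 1 - x^s, X_{s,t} = ([3]_x [s+1]_x [t+1]_x [s+t+3]_x)/([1]_x [s+3]_x [t+3]_x [s+t+1]_x) and N_{s,t} = ([3]_x [s+2]_x [t+2]_x [s+t+3]_x)/([2]_x [s+3]_x [t+3]_x [s+t+2]_x), the difference O_{s,t} = X_{s,t} - N_{s,t} equals x [3]_x [s]_x [t]_x ([s+t+3]_x)^2 / ([2]_x [s+3]_x [t+3]_x [s+t+1]_x [s+t+2]_x), as an identity of rational functions in x, for all natural numbers s, t. -/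
noncomputable section

/- Since x is not a root of unity, every bracket [n]_x with n ≥ 1 is nonzero; clearing these
denominators turns the claim into a polynomial identity in x, x^s and x^t. -/

theorem x_pow_ne_one {n : ℕ} (hn : n ≠ 0) : x ^ n ≠ 1 := by
  intro h
  rw [x, ← RatFunc.algebraMap_X, ← map_pow, ← map_one (algebraMap (Polynomial ℚ) K),
    (RatFunc.algebraMap_injective ℚ).eq_iff] at h
  simpa [hn] using congrArg Polynomial.natDegree h

theorem br_ne_zero_s5 {n : ℕ} (hn : n ≠ 0) : br n ≠ 0 :=
  sub_ne_zero.mpr (x_pow_ne_one hn).symm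

theorem O_closed_form (s t : ℕ) :
    Xc s t - N s t =
      x * br 3 * br s * br t * (br (s + t + 3)) ^ 2 /
        (br 2 * br (s + 3) * br (t + 3) * br (s + t + 1) * br (s + t + 2)) := by
  unfold Xc N
  field_simp [br_ne_zero_s5]
  unfold br
  ring
end
end
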